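/- Let 𝔑₁ be the 3-dimensional algebra with basis e₁, e₂, e₃ and nonzero products e₁e₂ = e₃, e₂e₁ = −e₃. Then a bilinear form θ on 𝔑₁ is a Zinbiel 2-cocycle if and only if θ(e₃, ·) = 0, i.e. Z²(𝔑₁, ℂ) = span{Δ₁₁, Δ₁₂, Δ₂₁, Δ₁₃, Δ₂₂, Δ₂₃} ∩ {θ : θ(e₃, ·) = 0}, and modulo coboundaries H²(𝔑₁, ℂ) is 5-dimensional, spanned by the classes of Δ₁₁, Δ₁₂, Δ₁₃, Δ₂₂, Δ₂₃. -/
import Mathlib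


/-- Standard basis vectors of `Fin 3 → ℂ`. -/
noncomputable def e (i : Fin 3) : Fin 3 → ℂ := Pi.single i 1

/-- Multiplication of the Zinbiel algebra `𝔑₁`: `e₁e₂ = e₃`, `e₂e₁ = -e₃`. -/
def mulN1 (a b : Fin 3 → ℂ) : Fin 3 → ℂ := fun k => if k = 2 then a 0 * b 1 - a 1 * b 0 else 0

lemma mul_antisymm (x y : Fin 3 → ℂ) : mulN1 x y + mulN1 y x = 0 := by
  funext k
  simp only [mulN1, Pi.add_apply, Pi.zero_apply]
  split <;> ring

lemma mul_eq_smul (a b : Fin 3 → ℂ) :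
    mulN1 a b = (a 0 * b 1 - a 1 * b 0) • e 2 := by
  funext k
  fin_cases k <;> simp [mulN1, e, Pi.single_apply]

lemma decomp (a : Fin 3 → ℂ) : a = a 0 • e 0 + a 1 • e 1 + a 2 • e 2 := by
  funext k
  fin_cases k <;> simp [e, Pi.single_apply]

theorem stmt_12 :
    (∀ θ : (Fin 3 → ℂ) →ₗ[ℂ] (Fin 3 → ℂ) →ₗ[ℂ] ℂ,
      ((∀ a b c : Fin 3 → ℂ, θ (mulN1 a b) c = θ a (mulN1 b c + mulN1 c b)) ↔
        (∀ b : Fin 3 → ℂ, θ (e 2) b = 0))) ∧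
    (∀ θ : (Fin 3 → ℂ) →ₗ[ℂ] (Fin 3 → ℂ) →ₗ[ℂ] ℂ,
      (∀ a b c : Fin 3 → ℂ, θ (mulN1 a b) c = θ a (mulN1 b c + mulN1 c b)) →
      ∃ (α₁ α₂ α₃ α₄ α₅ : ℂ) (f : (Fin 3 → ℂ) →ₗ[ℂ] ℂ),
        ∀ a b : Fin 3 → ℂ,
          θ a b = α₁ * (a 0 * b 0) + α₂ * (a 0 * b 1) + α₄ * (a 0 * b 2)
            + α₃ * (a 1 * b 1) + α₅ * (a 1 * b 2) + f (mulN1 a b)) ∧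
    (∀ (α₁ α₂ α₃ α₄ α₅ : ℂ) (f : (Fin 3 → ℂ) →ₗ[ℂ] ℂ),
      (∀ a b : Fin 3 → ℂ,
        α₁ * (a 0 * b 0) + α₂ * (a 0 * b 1) + α₄ * (a 0 * b 2)
          + α₃ * (a 1 * b 1) + α₅ * (a 1 * b 2) = f (mulN1 a b)) →
      α₁ = 0 ∧ α₂ = 0 ∧ α₃ = 0 ∧ α₄ = 0 ∧ α₅ = 0) := by
  have hiff : ∀ θ : (Fin 3 → ℂ) →ₗ[ℂ] (Fin 3 → ℂ) →ₗ[ℂ] ℂ,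
      ((∀ a b c : Fin 3 → ℂ, θ (mulN1 a b) c = θ a (mulN1 b c + mulN1 c b)) ↔
        (∀ b : Fin 3 → ℂ, θ (e 2) b = 0)) := by
    intro θ
    constructor
    · intro h b
      have h1 := h (e 0) (e 1) b
      have he : mulN1 (e 0) (e 1) = e 2 := by
        funext k; fin_cases k <;> simp [mulN1, e, Pi.single_apply]
      rw [he, mul_antisymm] at h1
      simpa using h1
    · intro h a b c
      rw [mul_antisymm, mul_eq_smul]
      simp [h]
  refine ⟨hiff, ?_, ?_⟩
  · intro θ hc
    have h2 : ∀ b : Fin 3 → ℂ, θ (e 2) b = 0 := (hiff θ).mp hc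
    refine ⟨θ (e 0) (e 0), θ (e 0) (e 1) + θ (e 1) (e 0), θ (e 1) (e 1),
      θ (e 0) (e 2), θ (e 1) (e 2),
      (-(θ (e 1) (e 0))) • ((LinearMap.proj 2 : (Fin 3 → ℂ) →ₗ[ℂ] ℂ)), ?_⟩
    intro a b
    have key : θ a b = θ (a 0 • e 0 + a 1 • e 1 + a 2 • e 2)
        (b 0 • e 0 + b 1 • e 1 + b 2 • e 2) := by
      rw [← decomp a, ← decomp b]
    rw [key]
    simp only [map_add, map_smul, LinearMap.add_apply, LinearMap.smul_apply,
      smul_eq_mul, h2, LinearMap.proj_apply, mulN1]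
    simp only [show ((2:Fin 3) = 2) = True from by simp, if_true]
    ring
  · intro α₁ α₂ α₃ α₄ α₅ f hf
    have hm0 : ∀ (i j : Fin 3), i = j → mulN1 (e i) (e j) = 0 := by
      intro i j hij
      subst hij
      funext k
      simp [mulN1, e, Pi.single_apply]
      split <;> fin_cases i <;> norm_num
    have h00 := hf (e 0) (e 0)
    have h01 := hf (e 0) (e 1)
    have h10 := hf (e 1) (e 0)
    have h02 := hf (e 0) (e 2)
    have h11 := hf (e 1) (e 1)
    have h12 := hf (e 1) (e 2)
    rw [hm0 0 0 rfl] at h00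
    rw [hm0 1 1 rfl] at h11
    have he01 : mulN1 (e 0) (e 1) = e 2 := by
      funext k; fin_cases k <;> simp [mulN1, e, Pi.single_apply]
    have he10 : mulN1 (e 1) (e 0) = -(e 2) := by
      funext k; fin_cases k <;> simp [mulN1, e, Pi.single_apply]
    have he02 : mulN1 (e 0) (e 2) = 0 := by
      funext k; fin_cases k <;> simp [mulN1, e, Pi.single_apply]
    have he12 : mulN1 (e 1) (e 2) = 0 := by
      funext k; fin_cases k <;> simp [mulN1, e, Pi.single_apply]
    rw [he01] at h01
    rw [he10] at h10
    rw [he02] at h02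
    rw [he12] at h12
    simp [e, Pi.single_apply, map_neg] at h00 h01 h10 h02 h11 h12
    exact ⟨h00, by rw [h01, h10], h11, h02, h12⟩
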